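/- In the micro-macro decomposition, weighted level ancestor queries reduce correctly: with weights strictly increasing along root-to-leaf paths, if v lies in a micro-tree Tᵢ (a component of T \ T₀) with root r, then for q ≤ weight(v): if weight(r) ≤ q then wla(v,q) lies in Tᵢ; otherwise wla(v,q) = wla(parent(r), q) if the latter is defined (i.e., q ≥ weight of the global root), and in the remaining boundary case wla(v,q) = r. -/
import Mathlib


/-- A rooted tree on a finite vertex type `V`, given by a parent function. -/
structure ParentTree (V : Type*) where
  parent : V → V
  root : V
  parent_root : parent root = root
  reaches_root : ∀ v, ∃ n, parent^[n] v = root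

namespace ParentTree

variable {V : Type*}

/-- `u` is an ancestor of `v` (ancestors include `v` itself). -/
def Anc (t : ParentTree V) (u v : V) : Prop := ∃ n, t.parent^[n] v = u

/-- The number of descendants of `v` (including `v` itself), i.e. subtree size. -/
noncomputable def desc [Fintype V] (t : ParentTree V) (v : V) : ℕ :=
  {u | t.Anc v u}.ncard

end ParentTree

open ParentTree

/-- `u` is the weighted level ancestor `wla(v,q)` w.r.t. valuation `f`:
`u` is an ancestor of `v` of weight at least `q` that is highest (an ancestor of
every ancestor of `v` of weight at least `q`, i.e. of minimal depth). -/
def IsWLA {V : Type*} (t : ParentTree V) (f : V → ℕ) (v : V) (q : ℕ) (u : V) : Prop :=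
  t.Anc u v ∧ q ≤ f u ∧ ∀ u', t.Anc u' v → q ≤ f u' → t.Anc u u'

/- Micro-macro reduction of weighted level ancestor queries: let `T₀` be the
ancestor-closed macro tree containing the global root, let `r ∉ T₀` be the root of
the micro-tree containing `v` (so `parent r ∈ T₀` and `r` is an ancestor of `v`),
and let `q` be a valid query (`w root ≤ q ≤ w v`). Then:
if `w r ≤ q`, `wla(v,q)` lies in the micro-tree of `r`;
if `q < w r` and `wla(parent r, q)` is defined (`q ≤ w (parent r)`), then
`wla(v,q) = wla(parent r, q)`; and in the remaining boundary case `wla(v,q) = r`. -/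
namespace ParentTree

variable {V : Type*}

lemma anc_trans' {t : ParentTree V} {u x v : V} (h1 : t.Anc u x) (h2 : t.Anc x v) :
    t.Anc u v := by
  obtain ⟨m, hm⟩ := h1; obtain ⟨n, hn⟩ := h2
  exact ⟨m + n, by rw [Function.iterate_add_apply, hn, hm]⟩

lemma anc_total' {t : ParentTree V} {a b v : V} (h1 : t.Anc a v) (h2 : t.Anc b v) :
    t.Anc a b ∨ t.Anc b a := by
  obtain ⟨m, hm⟩ := h1; obtain ⟨n, hn⟩ := h2
  rcases le_total m n with h | h
  · exact Or.inr ⟨n - m, by rw [← hm, ← Function.iterate_add_apply,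
      Nat.sub_add_cancel h, hn]⟩
  · exact Or.inl ⟨m - n, by rw [← hn, ← Function.iterate_add_apply,
      Nat.sub_add_cancel h, hm]⟩

lemma weight_le' {t : ParentTree V} {w : V → ℕ}
    (hw : ∀ x, x ≠ t.root → w (t.parent x) < w x)
    {u v : V} (h : t.Anc u v) : w u ≤ w v := by
  obtain ⟨n, hn⟩ := h
  induction n generalizing v with
  | zero => exact le_of_eq (congrArg w hn.symm)
  | succ n ih =>
    rw [Function.iterate_succ_apply] at hn
    have h1 : w u ≤ w (t.parent v) := ih hn
    by_cases hv : v = t.root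
    · subst hv; rwa [t.parent_root] at h1
    · exact h1.trans (hw v hv).le

lemma weight_lt' {t : ParentTree V} {w : V → ℕ}
    (hw : ∀ x, x ≠ t.root → w (t.parent x) < w x)
    {u v : V} (h : t.Anc u v) (hne : u ≠ v) : w u < w v := by
  obtain ⟨n, hn⟩ := h
  induction n generalizing v with
  | zero => exact absurd hn.symm hne
  | succ n ih =>
    rw [Function.iterate_succ_apply] at hn
    by_cases hv : v = t.root
    · have : t.parent v = v := by rw [hv, t.parent_root]
      rw [this] at hn
      exact ih hne hn
    · by_cases hup : u = t.parent v
      · rw [hup]; exact hw v hv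
      · exact (ih hup hn).trans (hw v hv)

end ParentTree

theorem wla_micro_macro {V : Type*} (t : ParentTree V) (w : V → ℕ)
    (hw : ∀ v, v ≠ t.root → w (t.parent v) < w v)
    (T₀ : Set V) (hT₀root : t.root ∈ T₀)
    (hT₀anc : ∀ u v, t.Anc u v → v ∈ T₀ → u ∈ T₀)
    (r v : V) (hr : r ∉ T₀) (hpr : t.parent r ∈ T₀) (hrv : t.Anc r v)
    (q : ℕ) (hql : w t.root ≤ q) (hqu : q ≤ w v) :
    (w r ≤ q → ∀ u, IsWLA t w v q u → t.Anc r u) ∧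
    (q < w r → q ≤ w (t.parent r) →
      ∀ u, IsWLA t w v q u ↔ IsWLA t w (t.parent r) q u) ∧
    (q < w r → ¬ q ≤ w (t.parent r) → IsWLA t w v q r) := by
  have hrroot : r ≠ t.root := fun h => hr (h ▸ hT₀root)
  have hprr : t.Anc (t.parent r) r := ⟨1, rfl⟩
  have hprv : t.Anc (t.parent r) v := anc_trans' hprr hrv
  refine ⟨?_, ?_, ?_⟩
  · intro hwr u hu
    obtain ⟨huv, hqu', hmin⟩ := hu
    rcases anc_total' huv hrv with h | h
    · -- u ancestor of r
      by_cases heq : u = r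
      · exact heq ▸ ⟨0, rfl⟩
      · have := weight_lt' hw h heq
        omega
    · exact h
  · intro hq hqpr u
    constructor
    · rintro ⟨huv, hqu', hmin⟩
      refine ⟨hmin _ hprv hqpr, hqu', ?_⟩
      intro u' hu' hqu''
      exact hmin u' (anc_trans' hu' hprv) hqu''
    · rintro ⟨hupr, hqu', hmin⟩
      have hur : t.Anc u r := anc_trans' hupr hprr
      refine ⟨anc_trans' hur hrv, hqu', ?_⟩
      intro u' hu' hqu''
      rcases anc_total' hu' hrv with h | h
      · -- u' ancestor of r
        by_cases heq : u' = r
        · exact heq ▸ hur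
        · obtain ⟨n, hn⟩ := h
          have hn1 : n ≠ 0 := by
            rintro rfl; exact heq hn.symm
          obtain ⟨m, rfl⟩ := Nat.exists_eq_succ_of_ne_zero hn1
          have : t.Anc u' (t.parent r) :=
            ⟨m, by rw [← hn, Function.iterate_succ_apply]⟩
          exact hmin u' this hqu''
      · exact anc_trans' hur h
  · intro hq hqpr
    refine ⟨hrv, hq.le, ?_⟩
    intro u' hu' hqu''
    rcases anc_total' hu' hrv with h | h
    · by_cases heq : u' = r
      · exact heq ▸ ⟨0, rfl⟩
      · have := weight_le' hw (show t.Anc u' (t.parent r) from ?_)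
        · omega
        · obtain ⟨n, hn⟩ := h
          have hn1 : n ≠ 0 := by rintro rfl; exact heq hn.symm
          obtain ⟨m, rfl⟩ := Nat.exists_eq_succ_of_ne_zero hn1
          exact ⟨m, by rw [← hn, Function.iterate_succ_apply]⟩
    · exact h
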